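/- arXiv:2512.04539 — 5 statements merged into one kernel-verified Lean document; each statement's English description precedes it below -/
import Mathlib

section
/- Quantile attainability: Let (Ω, 𝒜, P) be non-atomic, Y = [y_L, y_U] a random interval, α ∈ (0,1), and m ∈ [T_Y^{-1}(α), C_Y^{-1}(α)], where T_Y^{-1}(α) and C_Y^{-1}(α) are the α-quantiles of y_L and y_U. Then there exists a measurable selection y of Y with left-continuous α-quantile F_y^{-1}(α) = m. -/
open MeasureTheory Set

/-- Left-continuous α-quantile of a real random variable. -/
noncomputable def quantileFn {Ω : Type*} [MeasurableSpace Ω] (μ : Measure Ω)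
    (Z : Ω → ℝ) (α : ℝ) : ℝ :=
  sInf {t : ℝ | ENNReal.ofReal α ≤ μ {ω | Z ω ≤ t}}

/-! The selection is `y = max y_L (min m y_U)`, i.e. `m` clipped to `[y_L, y_U]`. Above `m` its
sublevel sets are those of `y_L`, whose quantile is `≤ m`; below `m` they lie inside those of
`y_U`, whose quantile is `≥ m`. Hence the distribution function of `y` crosses level `α` exactly
at `m`. -/

open Filter Topology

section Quantile

variable {Ω : Type*}

lemma monotone_setOf_le (Z : Ω → ℝ) : Monotone fun t : ℝ => {ω | Z ω ≤ t} :=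
  fun _ _ hst _ hω => le_trans hω hst

variable [MeasurableSpace Ω] {μ : Measure Ω} {Z : Ω → ℝ} {α t : ℝ}

lemma tendsto_measure_setOf_le_atTop (μ : Measure Ω) (Z : Ω → ℝ) :
    Tendsto (fun t => μ {ω | Z ω ≤ t}) atTop (𝓝 (μ univ)) := by
  have hU : (⋃ t : ℝ, {ω | Z ω ≤ t}) = univ := iUnion_eq_univ_iff.2 fun ω => ⟨Z ω, by simp⟩
  have h := tendsto_measure_iUnion_atTop (μ := μ) (monotone_setOf_le Z)
  rwa [hU] at h

lemma tendsto_measure_setOf_le_atBot [IsFiniteMeasure μ] (hZ : Measurable Z) :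
    Tendsto (fun t => μ {ω | Z ω ≤ t}) atBot (𝓝 0) := by
  have hI : (⋂ t : ℝ, {ω | Z ω ≤ t}) = ∅ :=
    iInter_eq_empty_iff.2 fun ω => ⟨Z ω - 1, by simp⟩
  have h := tendsto_measure_iInter_atBot (μ := μ) (s := fun t => {ω | Z ω ≤ t})
    (fun _ => (hZ measurableSet_Iic).nullMeasurableSet) (monotone_setOf_le Z)
    ⟨0, measure_ne_top μ _⟩
  rwa [hI, measure_empty] at h

lemma exists_ofReal_le_measure_setOf_le [IsProbabilityMeasure μ] (Z : Ω → ℝ) (hα : α < 1) :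
    ∃ t, ENNReal.ofReal α ≤ μ {ω | Z ω ≤ t} := by
  have hlt : ENNReal.ofReal α < μ univ := by simpa using hα
  exact ((tendsto_measure_setOf_le_atTop μ Z).eventually_const_le hlt).exists

lemma bddBelow_setOf_ofReal_le_measure [IsFiniteMeasure μ] (hZ : Measurable Z) (hα : 0 < α) :
    BddBelow {t : ℝ | ENNReal.ofReal α ≤ μ {ω | Z ω ≤ t}} := by
  obtain ⟨s, hs⟩ := ((tendsto_measure_setOf_le_atBot (μ := μ) hZ).eventually_lt_const
    (ENNReal.ofReal_pos.2 hα)).exists_forall_of_atBot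
  exact ⟨s, fun t ht => not_lt.1 fun hts => (hs t hts.le).not_ge ht⟩

lemma quantileFn_le [IsFiniteMeasure μ] (hZ : Measurable Z) (hα : 0 < α)
    (ht : ENNReal.ofReal α ≤ μ {ω | Z ω ≤ t}) : quantileFn μ Z α ≤ t :=
  csInf_le (bddBelow_setOf_ofReal_le_measure hZ hα) ht

lemma ofReal_le_measure_of_quantileFn_lt [IsProbabilityMeasure μ] (hZ : Measurable Z)
    (hα : α ∈ Ioo 0 1) (ht : quantileFn μ Z α < t) :
    ENNReal.ofReal α ≤ μ {ω | Z ω ≤ t} := by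
  rw [quantileFn, csInf_lt_iff (bddBelow_setOf_ofReal_le_measure hZ hα.1)
    (exists_ofReal_le_measure_setOf_le Z hα.2)] at ht
  obtain ⟨s, hs, hst⟩ := ht
  exact hs.trans (measure_mono (monotone_setOf_le Z hst.le))

lemma quantileFn_eq_of_forall {m : ℝ}
    (hgt : ∀ t, m < t → ENNReal.ofReal α ≤ μ {ω | Z ω ≤ t})
    (hge : ∀ t, ENNReal.ofReal α ≤ μ {ω | Z ω ≤ t} → m ≤ t) :
    quantileFn μ Z α = m :=
  csInf_eq_of_forall_ge_of_forall_gt_exists_lt ⟨m + 1, hgt _ (lt_add_one m)⟩ hge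
    fun w hw => ⟨(m + w) / 2, hgt _ (by linarith), by linarith⟩

lemma quantileFn_max_min [IsProbabilityMeasure μ] {yL yU : Ω → ℝ}
    (hL : Measurable yL) (hU : Measurable yU) (hα : α ∈ Ioo 0 1) {m : ℝ}
    (hm : m ∈ Icc (quantileFn μ yL α) (quantileFn μ yU α)) :
    quantileFn μ (fun ω => max (yL ω) (min m (yU ω))) α = m := by
  apply quantileFn_eq_of_forall
  · intro t hmt
    have hset : {ω | max (yL ω) (min m (yU ω)) ≤ t} = {ω | yL ω ≤ t} := by
      ext ω
      simp only [mem_ofPred_eq, max_le_iff, and_iff_left_iff_imp]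
      exact fun _ => (min_le_left _ _).trans hmt.le
    rw [hset]
    exact ofReal_le_measure_of_quantileFn_lt hL hα (hm.1.trans_lt hmt)
  · intro t ht
    by_contra! htm
    have hsub : {ω | max (yL ω) (min m (yU ω)) ≤ t} ⊆ {ω | yU ω ≤ t} := by
      intro ω hω
      have hmin : min m (yU ω) ≤ t := (le_max_right _ _).trans hω
      exact (min_le_iff.1 hmin).resolve_left htm.not_ge
    exact htm.not_ge (hm.2.trans (quantileFn_le hU hα.1 (ht.trans (measure_mono hsub))))

end Quantile

theorem stmt_4_general
    {Ω : Type*} [MeasurableSpace Ω] (μ : Measure Ω) [IsProbabilityMeasure μ]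
    (yL yU : Ω → ℝ) (hmL : Measurable yL) (hmU : Measurable yU)
    (hle : ∀ᵐ ω ∂μ, yL ω ≤ yU ω)
    (α : ℝ) (hα : α ∈ Set.Ioo (0 : ℝ) 1)
    (m : ℝ) (hm : m ∈ Set.Icc (quantileFn μ yL α) (quantileFn μ yU α)) :
    ∃ y : Ω → ℝ, Measurable y ∧ (∀ᵐ ω ∂μ, yL ω ≤ y ω ∧ y ω ≤ yU ω) ∧
      quantileFn μ y α = m := by
  refine ⟨fun ω => max (yL ω) (min m (yU ω)), hmL.max (measurable_const.min hmU), ?_,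
    quantileFn_max_min hmL hmU hα hm⟩
  filter_upwards [hle] with ω hω
  exact ⟨le_max_left _ _, max_le hω (min_le_right _ _)⟩

/-- Quantile attainability: on a non-atomic probability space, for any
m between the α-quantiles of y_L and y_U there is a measurable selection
of [y_L, y_U] whose α-quantile is exactly m. -/
theorem stmt_4
    {Ω : Type*} [MeasurableSpace Ω] (μ : Measure Ω) [IsProbabilityMeasure μ]
    [NullSingletonClass μ]
    (yL yU : Ω → ℝ) (hmL : Measurable yL) (hmU : Measurable yU)
    (hle : ∀ᵐ ω ∂μ, yL ω ≤ yU ω)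
    (α : ℝ) (hα : α ∈ Set.Ioo (0 : ℝ) 1)
    (m : ℝ) (hm : m ∈ Set.Icc (quantileFn μ yL α) (quantileFn μ yU α)) :
    ∃ y : Ω → ℝ, Measurable y ∧ (∀ᵐ ω ∂μ, yL ω ≤ y ω ∧ y ω ≤ yU ω) ∧
      quantileFn μ y α = m :=
  stmt_4_general μ yL yU hmL hmU hle α hα m hm
end

section
/- Quantile–area identity: For a nonnegative real random variable Z with distribution function F_Z and left-continuous quantile function F_Z^{-1}, and for every α ∈ (0,1), ∫₀^α F_Z^{-1}(u) du = ∫₀^∞ (α − F_Z(t))₊ dt, where (x)₊ = max{x,0}. -/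
/-!
Both sides are the Lebesgue measure of the region `{(u, t) | 0 < u ≤ α, 0 < t, F t < u}`.
For `0 < u < 1` the quantile is a Galois inverse of the right-continuous `F`:
`t < F⁻¹ u ↔ F t < u`. Slicing the region at fixed `u` therefore gives `(0, F⁻¹ u)`, and
slicing at fixed `t` gives `(F t, α]`; Tonelli identifies the two iterated integrals.
-/

open MeasureTheory Set Filter

theorem setLIntegral_Ioc_ofReal_eq_setLIntegral_Ioi_ofReal_sub {F Q : ℝ → ℝ}
    (hF : Measurable F) (hF0 : ∀ t, 0 ≤ F t) {α : ℝ}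
    (hQ : ∀ u ∈ Ioc 0 α, ∀ t, t < Q u ↔ F t < u) :
    ∫⁻ u in Ioc 0 α, ENNReal.ofReal (Q u) = ∫⁻ t in Ioi 0, ENNReal.ofReal (α - F t) := by
  set R : Set (ℝ × ℝ) := {p | F p.2 < p.1}
  have hR : MeasurableSet R := measurableSet_lt (hF.comp measurable_snd) measurable_fst
  calc ∫⁻ u in Ioc 0 α, ENNReal.ofReal (Q u)
      = ∫⁻ u in Ioc 0 α, volume.restrict (Ioi 0) (Prod.mk u ⁻¹' R) := by
        refine setLIntegral_congr_fun measurableSet_Ioc fun u hu => ?_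
        have hslice : Prod.mk u ⁻¹' R = Iio (Q u) := by
          ext t; exact (hQ u hu t).symm
        rw [hslice, Measure.restrict_apply measurableSet_Iio, Iio_inter_Ioi, Real.volume_Ioo,
          sub_zero]
    _ = (volume.restrict (Ioc 0 α)).prod (volume.restrict (Ioi 0)) R :=
        (Measure.prod_apply hR).symm
    _ = ∫⁻ t in Ioi 0, volume.restrict (Ioc 0 α) ((fun u => (u, t)) ⁻¹' R) :=
        Measure.prod_apply_symm hR
    _ = ∫⁻ t in Ioi 0, ENNReal.ofReal (α - F t) := by
        refine lintegral_congr fun t => ?_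
        have hslice : (fun u => (u, t)) ⁻¹' R ∩ Ioc 0 α = Ioc (F t) α := by
          ext u
          simp only [R, mem_inter_iff, mem_preimage, mem_Ioc]
          constructor
          · rintro ⟨htu, -, huα⟩; exact ⟨htu, huα⟩
          · rintro ⟨htu, huα⟩; exact ⟨htu, (hF0 t).trans_lt htu, huα⟩
        rw [Measure.restrict_apply (hR.preimage measurable_prodMk_right), hslice,
          Real.volume_Ioc]

namespace ProbabilityTheory

variable (μ : Measure ℝ)

/-- Junk outside `(0, 1)`, where the set may be empty or unbounded below. -/
noncomputable def quantile (u : ℝ) : ℝ := sInf {t | u ≤ cdf μ t}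

variable {μ}

theorem nonempty_setOf_le_cdf {u : ℝ} (hu : u < 1) : {t | u ≤ cdf μ t}.Nonempty :=
  ((tendsto_cdf_atTop μ).eventually (eventually_ge_nhds hu)).exists

theorem bddBelow_setOf_le_cdf {u : ℝ} (hu : 0 < u) : BddBelow {t | u ≤ cdf μ t} := by
  obtain ⟨b, hb⟩ :=
    eventually_atBot.mp ((tendsto_cdf_atBot μ).eventually (eventually_lt_nhds hu))
  refine ⟨b, fun t ht => ?_⟩
  by_contra! htb
  exact (hb t htb.le).not_ge ht

theorem le_cdf_quantile {u : ℝ} (hu : u ∈ Ioo 0 1) : u ≤ cdf μ (quantile μ u) := by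
  have hlt : ∀ x, quantile μ u < x → u ≤ cdf μ x := fun x hx => by
    obtain ⟨s, hs, hsx⟩ :=
      (csInf_lt_iff (bddBelow_setOf_le_cdf hu.1) (nonempty_setOf_le_cdf hu.2)).mp hx
    exact hs.trans (monotone_cdf μ hsx.le)
  refine ge_of_tendsto ((cdf μ).right_continuous _ |>.mono Ioi_subset_Ici_self) ?_
  filter_upwards [self_mem_nhdsWithin] with x hx using hlt x hx

theorem quantile_le_iff {u : ℝ} (hu : u ∈ Ioo 0 1) {t : ℝ} :
    quantile μ u ≤ t ↔ u ≤ cdf μ t :=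
  ⟨fun h => (le_cdf_quantile hu).trans (monotone_cdf μ h),
    fun h => csInf_le (bddBelow_setOf_le_cdf hu.1) h⟩

theorem lt_quantile_iff {u : ℝ} (hu : u ∈ Ioo 0 1) {t : ℝ} :
    t < quantile μ u ↔ cdf μ t < u := by
  simpa only [not_le] using (quantile_le_iff hu).not

theorem monotoneOn_quantile : MonotoneOn (quantile μ) (Ioo 0 1) :=
  fun _ hu _ hv huv => (quantile_le_iff hu).mpr (huv.trans (le_cdf_quantile hv))

theorem cdf_eq_zero_of_neg [IsProbabilityMeasure μ] (h0 : ∀ᵐ x ∂μ, 0 ≤ x) {t : ℝ}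
    (ht : t < 0) : cdf μ t = 0 := by
  have hnull : μ (Iic t) = 0 :=
    measure_mono_null (fun x hx => not_le.mpr ((mem_Iic.mp hx).trans_lt ht)) (ae_iff.mp h0)
  rw [cdf_eq_real, measureReal_def, hnull, ENNReal.toReal_zero]

theorem quantile_nonneg [IsProbabilityMeasure μ] (h0 : ∀ᵐ x ∂μ, 0 ≤ x) {u : ℝ}
    (hu : u ∈ Ioo 0 1) : 0 ≤ quantile μ u := by
  by_contra! hneg
  have hle : u ≤ cdf μ (quantile μ u) := le_cdf_quantile hu
  rw [cdf_eq_zero_of_neg h0 hneg] at hle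
  exact hu.1.not_ge hle

theorem integral_quantile_eq_integral_max_sub_cdf [IsProbabilityMeasure μ]
    (h0 : ∀ᵐ x ∂μ, 0 ≤ x) {α : ℝ} (hα : α ∈ Ioo 0 1) :
    ∫ u in (0 : ℝ)..α, quantile μ u = ∫ t in Ioi 0, max (α - cdf μ t) 0 := by
  have hsub : Ioc 0 α ⊆ Ioo 0 1 := fun u hu => ⟨hu.1, hu.2.trans_lt hα.2⟩
  have hQ_meas :
      AEMeasurable (fun u => ENNReal.ofReal (quantile μ u)) (volume.restrict (Ioc 0 α)) :=
    ENNReal.measurable_ofReal.comp_aemeasurable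
      (aemeasurable_restrict_of_monotoneOn measurableSet_Ioc (monotoneOn_quantile.mono hsub))
  have hF_meas :
      AEMeasurable (fun t => ENNReal.ofReal (α - cdf μ t)) (volume.restrict (Ioi 0)) :=
    (ENNReal.measurable_ofReal.comp
      (measurable_const.sub (monotone_cdf μ).measurable)).aemeasurable
  calc ∫ u in (0 : ℝ)..α, quantile μ u
      = ∫ u in Ioc 0 α, (ENNReal.ofReal (quantile μ u)).toReal := by
        rw [intervalIntegral.integral_of_le hα.1.le]
        refine setIntegral_congr_fun measurableSet_Ioc fun u hu => ?_
        exact (ENNReal.toReal_ofReal (quantile_nonneg h0 (hsub hu))).symm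
    _ = (∫⁻ u in Ioc 0 α, ENNReal.ofReal (quantile μ u)).toReal :=
        integral_toReal hQ_meas (.of_forall fun _ => ENNReal.ofReal_lt_top)
    _ = (∫⁻ t in Ioi 0, ENNReal.ofReal (α - cdf μ t)).toReal := by
        rw [setLIntegral_Ioc_ofReal_eq_setLIntegral_Ioi_ofReal_sub (monotone_cdf μ).measurable
          (cdf_nonneg μ) fun u hu t => lt_quantile_iff (hsub hu)]
    _ = ∫ t in Ioi 0, max (α - cdf μ t) 0 :=
        (integral_toReal hF_meas (.of_forall fun _ => ENNReal.ofReal_lt_top)).symm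

end ProbabilityTheory

open ProbabilityTheory in
theorem stmt_9_general
    {Ω : Type*} [MeasurableSpace Ω] (μ : Measure Ω) [IsProbabilityMeasure μ]
    (Z : Ω → ℝ) (hZm : Measurable Z) (hZ0 : ∀ᵐ ω ∂μ, 0 ≤ Z ω)
    (F : ℝ → ℝ) (hF : ∀ t, F t = (μ {ω | Z ω ≤ t}).toReal)
    (Finv : ℝ → ℝ) (hFinv : ∀ u, Finv u = sInf {t : ℝ | u ≤ F t})
    (α : ℝ) (hα : α ∈ Set.Ioo (0 : ℝ) 1) :
    (∫ u in (0 : ℝ)..α, Finv u) = ∫ t in Set.Ioi (0 : ℝ), max (α - F t) 0 := by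
  have := Measure.isProbabilityMeasure_map (μ := μ) hZm.aemeasurable
  have hF_cdf : F = cdf (μ.map Z) := funext fun t => by
    rw [hF, cdf_eq_real, measureReal_def, Measure.map_apply hZm measurableSet_Iic]
    rfl
  have hFinv_quantile : Finv = quantile (μ.map Z) := funext fun u => by
    rw [hFinv, hF_cdf]
    rfl
  have hmap0 : ∀ᵐ x ∂μ.map Z, 0 ≤ x :=
    (ae_map_iff hZm.aemeasurable measurableSet_Ici).mpr hZ0
  rw [hF_cdf, hFinv_quantile]
  exact integral_quantile_eq_integral_max_sub_cdf hmap0 hα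

/-- Quantile–area identity: for a nonnegative integrable random variable Z and
α ∈ (0,1), ∫₀^α F_Z^{-1}(u) du = ∫₀^∞ (α − F_Z(t))₊ dt. -/
theorem stmt_9
    {Ω : Type*} [MeasurableSpace Ω] (μ : Measure Ω) [IsProbabilityMeasure μ]
    (Z : Ω → ℝ) (hZm : Measurable Z) (hZ0 : ∀ᵐ ω ∂μ, 0 ≤ Z ω)
    (hZi : Integrable Z μ)
    (F : ℝ → ℝ) (hF : ∀ t, F t = (μ {ω | Z ω ≤ t}).toReal)
    (Finv : ℝ → ℝ) (hFinv : ∀ u, Finv u = sInf {t : ℝ | u ≤ F t})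
    (α : ℝ) (hα : α ∈ Set.Ioo (0 : ℝ) 1) :
    (∫ u in (0 : ℝ)..α, Finv u) = ∫ t in Set.Ioi (0 : ℝ), max (α - F t) 0 :=
  stmt_9_general μ Z hZm hZ0 F hF Finv hFinv α hα
end

section
/- Median-restricted mean upper bound: Let Y = [y_L, y_U] be an integrable random interval, m ∈ ℝ, M = {y_L ≤ m ≤ y_U}, p₀ = P(M), p₋ = P(y_U < m) ≤ 1/2, and α₋ = (1/2 − p₋)₊. Then every selection y of Y with P(y ≤ m) ≥ 1/2 satisfies E[y] ≤ E[y_U] − p₀ ∫₀^{α₋/p₀} F^{-1}_{U_m|M}(u) du, where U_m = y_U − m and F^{-1}_{U_m|M} is the quantile function of U_m conditional on M. -/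
open MeasureTheory Set ProbabilityTheory

/-- Hardy–Littlewood type lower bound: for a nonneg r.v. `V` on a probability space,
its quantile function `Q`, and a set `B` with `ν B ≥ c`, we have `∫₀^c Q ≤ ∫_B V`. -/
lemma hl_bound {Ω : Type*} [MeasurableSpace Ω] (ν : Measure Ω) [IsProbabilityMeasure ν]
    (V : Ω → ℝ) (hV : Measurable V) (hVnn : ∀ᵐ ω ∂ν, 0 ≤ V ω)
    (Q : ℝ → ℝ) (hQ : ∀ u, Q u = sInf {t : ℝ | ENNReal.ofReal u ≤ ν {ω | V ω ≤ t}})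
    (c : ℝ) (hc0 : 0 < c) (hc1 : c ≤ 1)
    (B : Set Ω) (hB : MeasurableSet B) (hVB : ∀ ω ∈ B, 0 ≤ V ω)
    (hνB : ENNReal.ofReal c ≤ ν B)
    (hVint : Integrable V ν) :
    ∫ u in (0:ℝ)..c, Q u ≤ ∫ ω in B, V ω ∂ν := by
  set F : ℝ → ENNReal := fun t => ν {ω | V ω ≤ t} with hF
  set S : ℝ → Set ℝ := fun u => {t : ℝ | ENNReal.ofReal u ≤ F t} with hS
  have hFmono : Monotone F := by
    intro s t hst
    exact measure_mono (fun ω hω => le_trans hω hst)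
  have hFneg : ∀ t : ℝ, t < 0 → F t = 0 := by
    intro t ht
    refine measure_mono_null (fun ω hω => ?_) (by simpa [ae_iff, not_le] using hVnn)
    exact lt_of_le_of_lt hω ht
  have hSbdd : ∀ u : ℝ, 0 < u → BddBelow (S u) := by
    intro u hu
    refine ⟨0, fun t ht => ?_⟩
    by_contra hneg
    push_neg at hneg
    have := hFneg t hneg
    simp only [hS, mem_setOf_eq, this, nonpos_iff_eq_zero, ENNReal.ofReal_eq_zero] at ht
    exact absurd ht (not_le.mpr hu)
  have hSne : ∀ u : ℝ, u < 1 → (S u).Nonempty := by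
    intro u hu
    have hUnion : ⋃ n : ℕ, {ω | V ω ≤ (n : ℝ)} = univ := by
      ext ω; simp only [mem_iUnion, mem_setOf_eq, mem_univ, iff_true]
      exact exists_nat_ge (V ω)
    have hdirU : Directed (· ⊆ ·) (fun n : ℕ => {ω | V ω ≤ (n : ℝ)}) :=
      Monotone.directed_le (fun n m hnm => fun ω (hω : V ω ≤ (n:ℝ)) =>
        show V ω ≤ (m:ℝ) from le_trans hω (Nat.cast_le.mpr hnm))
    have hsup : ν univ = ⨆ n : ℕ, F n := by
      rw [← hUnion]
      exact hdirU.measure_iUnion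
    have h1 : ENNReal.ofReal u < ⨆ n : ℕ, F n := by
      rw [← hsup, measure_univ]
      exact ENNReal.ofReal_lt_one.mpr hu
    obtain ⟨n, hn⟩ := lt_iSup_iff.mp h1
    exact ⟨n, hn.le⟩
  -- right continuity: ofReal u ≤ F (Q u) for 0 < u < 1
  have hQmem : ∀ u : ℝ, 0 < u → u < 1 → ENNReal.ofReal u ≤ F (Q u) := by
    intro u hu0 hu1
    have hne := hSne u hu1
    have hbdd := hSbdd u hu0
    have hset : {ω | V ω ≤ Q u} = ⋂ n : ℕ, {ω | V ω ≤ Q u + 1 / (n + 1)} := by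
      ext ω
      simp only [mem_setOf_eq, mem_iInter]
      constructor
      · intro h n; have : (0:ℝ) < 1 / (n + 1) := by positivity
        linarith
      · intro h
        by_contra hlt
        push_neg at hlt
        obtain ⟨n, hn⟩ := exists_nat_one_div_lt (sub_pos.mpr hlt)
        have := h n
        linarith
    have hmeas : ∀ n : ℕ, MeasurableSet {ω | V ω ≤ Q u + 1 / (n + 1)} :=
      fun n => hV measurableSet_Iic
    have hdir : Directed (· ⊇ ·) (fun n : ℕ => {ω | V ω ≤ Q u + 1 / (n + 1)}) := by
      apply directed_of_isDirected_le
      intro n m hnm ω hω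
      simp only [mem_setOf_eq] at hω ⊢
      have hnm' : (n:ℝ) ≤ m := Nat.cast_le.mpr hnm
      have : (1:ℝ) / (m + 1) ≤ 1 / (n + 1) := by
        apply one_div_le_one_div_of_le (by positivity)
        linarith
      linarith
    have hinter : F (Q u) = ⨅ n : ℕ, ν {ω | V ω ≤ Q u + 1 / (n + 1)} := by
      rw [hF]; simp only
      rw [hset]
      exact hdir.measure_iInter (fun n => (hmeas n).nullMeasurableSet)
        ⟨0, measure_ne_top _ _⟩
    rw [hinter]
    refine le_iInf fun n => ?_
    have hQS : Q u = sInf (S u) := hQ u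
    have hpos : (0:ℝ) < 1 / (n + 1) := by positivity
    have hlt : sInf (S u) < Q u + 1 / (n + 1) := by
      rw [hQS]; linarith
    obtain ⟨t, htS, htlt⟩ := exists_lt_of_csInf_lt hne hlt
    exact le_trans htS (hFmono htlt.le)
  -- Galois connection
  have hGalois : ∀ u s : ℝ, 0 < u → u < 1 → (Q u ≤ s ↔ ENNReal.ofReal u ≤ F s) := by
    intro u s hu0 hu1
    constructor
    · intro h; exact le_trans (hQmem u hu0 hu1) (hFmono h)
    · intro h; rw [hQ u]; exact csInf_le (hSbdd u hu0) h
  have hQnn : ∀ u : ℝ, 0 < u → u < 1 → 0 ≤ Q u := by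
    intro u hu0 hu1
    rw [hQ u]
    refine le_csInf (hSne u hu1) fun t ht => ?_
    by_contra hneg
    push_neg at hneg
    have h0 : ν {ω | V ω ≤ t} = 0 := hFneg t hneg
    simp only [mem_setOf_eq, h0, nonpos_iff_eq_zero, ENNReal.ofReal_eq_zero] at ht
    linarith
  -- measurability & nonnegativity of Q on (0,c)
  have hQmonoOn : MonotoneOn Q (Ioo (0:ℝ) c) := by
    intro u hu v hv huv
    rw [hQ u, hQ v]
    refine csInf_le_csInf (hSbdd u hu.1) (hSne v (lt_of_lt_of_le hv.2 hc1)) ?_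
    intro t ht
    exact le_trans (ENNReal.ofReal_le_ofReal huv) ht
  have hQae : AEMeasurable Q (volume.restrict (Ioo (0:ℝ) c)) :=
    aemeasurable_restrict_of_monotoneOn measurableSet_Ioo hQmonoOn
  have hQnnae : 0 ≤ᵐ[volume.restrict (Ioo (0:ℝ) c)] Q :=
    (ae_restrict_iff' measurableSet_Ioo).2 (ae_of_all _ fun u hu =>
      hQnn u hu.1 (lt_of_lt_of_le hu.2 hc1))
  have hVnnae : 0 ≤ᵐ[ν.restrict B] V :=
    (ae_restrict_iff' hB).2 (ae_of_all _ hVB)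
  -- key lintegral comparison via layer cake
  have hK : ∫⁻ u in Ioo (0:ℝ) c, ENNReal.ofReal (Q u) ≤ ∫⁻ ω in B, ENNReal.ofReal (V ω) ∂ν := by
    rw [lintegral_eq_lintegral_meas_lt (volume.restrict (Ioo (0:ℝ) c)) hQnnae hQae,
      lintegral_eq_lintegral_meas_lt (ν.restrict B) hVnnae (hV.aemeasurable.restrict)]
    refine lintegral_mono_ae ((ae_restrict_iff' measurableSet_Ioi).2 (ae_of_all _ fun s hs => ?_))
    have hFs_ne : F s ≠ ⊤ := measure_ne_top _ _
    have hset : {u : ℝ | s < Q u} ∩ Ioo 0 c = Ioo ((F s).toReal) c := by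
      ext u
      simp only [mem_inter_iff, mem_setOf_eq, mem_Ioo]
      constructor
      · rintro ⟨hsQ, hu0, huc⟩
        refine ⟨?_, huc⟩
        rw [← ENNReal.lt_ofReal_iff_toReal_lt hFs_ne]
        by_contra hcon
        push_neg at hcon
        have := (hGalois u s hu0 (lt_of_lt_of_le huc hc1)).mpr hcon
        linarith
      · rintro ⟨hFu, huc⟩
        have hu0 : 0 < u := lt_of_le_of_lt ENNReal.toReal_nonneg hFu
        refine ⟨?_, hu0, huc⟩
        by_contra hcon
        push_neg at hcon
        have := (hGalois u s hu0 (lt_of_lt_of_le huc hc1)).mp hcon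
        have h2 := (ENNReal.lt_ofReal_iff_toReal_lt hFs_ne).mpr hFu
        exact absurd this (not_le.mpr h2)
    rw [Measure.restrict_apply' measurableSet_Ioo, Measure.restrict_apply' hB, hset,
      Real.volume_Ioo]
    have hsub : ENNReal.ofReal (c - (F s).toReal) = ENNReal.ofReal c - F s := by
      rw [ENNReal.ofReal_sub _ ENNReal.toReal_nonneg, ENNReal.ofReal_toReal hFs_ne]
    rw [hsub]
    refine le_trans (tsub_le_tsub_right hνB _) ?_
    rw [tsub_le_iff_right]
    refine le_trans (measure_mono (fun ω hω => ?_)) (measure_union_le _ _)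
    by_cases hVs : s < V ω
    · exact Or.inl ⟨hVs, hω⟩
    · exact Or.inr (not_lt.mp hVs)
  -- convert to Bochner integrals
  have hIoc : ∫ u in (0:ℝ)..c, Q u = ∫ u in Ioo (0:ℝ) c, Q u := by
    rw [intervalIntegral.integral_of_le hc0.le, integral_Ioc_eq_integral_Ioo]
  have h1 : ∫ u in Ioo (0:ℝ) c, Q u
      = (∫⁻ u in Ioo (0:ℝ) c, ENNReal.ofReal (Q u)).toReal :=
    integral_eq_lintegral_of_nonneg_ae hQnnae hQae.aestronglyMeasurable
  have h2 : ∫ ω in B, V ω ∂ν = (∫⁻ ω in B, ENNReal.ofReal (V ω) ∂ν).toReal :=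
    integral_eq_lintegral_of_nonneg_ae hVnnae (hV.aestronglyMeasurable.restrict)
  have hfin : ∫⁻ ω in B, ENNReal.ofReal (V ω) ∂ν ≠ ⊤ :=
    (Integrable.lintegral_lt_top (hVint.integrableOn)).ne
  rw [hIoc, h1, h2]
  exact ENNReal.toReal_mono hfin hK

/-- Median-restricted mean upper bound: any selection y of [y_L,y_U] with
P(y ≤ m) ≥ 1/2 satisfies
E[y] ≤ E[y_U] − p₀ ∫₀^{α₋/p₀} F^{-1}_{U_m|M}(u) du. -/
theorem stmt_11
    {Ω : Type*} [MeasurableSpace Ω] (μ : Measure Ω) [IsProbabilityMeasure μ]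
    (yL yU : Ω → ℝ) (hmL : Measurable yL) (hmU : Measurable yU)
    (hiL : Integrable yL μ) (hiU : Integrable yU μ)
    (hle : ∀ᵐ ω ∂μ, yL ω ≤ yU ω)
    (m : ℝ)
    (M : Set Ω) (hM : M = {ω | yL ω ≤ m ∧ m ≤ yU ω})
    (p₀ pminus αminus : ℝ)
    (hp₀ : p₀ = (μ M).toReal)
    (hpm : pminus = (μ {ω | yU ω < m}).toReal)
    (hpmle : pminus ≤ 1 / 2)
    (hαm : αminus = max (1 / 2 - pminus) 0)
    (Q : ℝ → ℝ)
    (hQ : ∀ u : ℝ, Q u = sInf {t : ℝ | ENNReal.ofReal u ≤ μ[|M] {ω | yU ω - m ≤ t}})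
    (y : Ω → ℝ) (hmy : Measurable y)
    (hsel : ∀ᵐ ω ∂μ, yL ω ≤ y ω ∧ y ω ≤ yU ω)
    (hmed : (1 : ENNReal) / 2 ≤ μ {ω | y ω ≤ m}) :
    ∫ ω, y ω ∂μ ≤ (∫ ω, yU ω ∂μ) - p₀ * ∫ u in (0 : ℝ)..(αminus / p₀), Q u := by
  have hiy : Integrable y μ := by
    refine Integrable.mono' (hiL.abs.add hiU.abs) hmy.aestronglyMeasurable ?_
    filter_upwards [hsel] with ω hω
    have h1 := neg_abs_le (yL ω)
    have h2 := le_abs_self (yU ω)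
    have h3 := abs_nonneg (yL ω)
    have h4 := abs_nonneg (yU ω)
    simp only [Pi.add_apply, Real.norm_eq_abs, abs_le]
    constructor <;> linarith [hω.1, hω.2]
  have hbase : ∫ ω, y ω ∂μ ≤ ∫ ω, yU ω ∂μ :=
    integral_mono_ae hiy hiU (by filter_upwards [hsel] with ω hω using hω.2)
  set c := αminus / p₀ with hc
  by_cases hczero : c = 0
  · rw [hczero]
    simp [hbase]
  -- main case
  have hα0 : 0 ≤ αminus := by rw [hαm]; exact le_max_right _ _
  have hp₀0 : 0 ≤ p₀ := by rw [hp₀]; exact ENNReal.toReal_nonneg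
  have hαpos : 0 < αminus := by
    rcases lt_or_eq_of_le hα0 with h | h
    · exact h
    · exfalso; exact hczero (by rw [hc, ← h, zero_div])
  have hppos : 0 < p₀ := by
    rcases lt_or_eq_of_le hp₀0 with h | h
    · exact h
    · exfalso; exact hczero (by rw [hc, ← h, div_zero])
  have hcpos : 0 < c := div_pos hαpos hppos
  have hMmeas : MeasurableSet M := by
    rw [hM]
    exact (hmL measurableSet_Iic).inter (measurableSet_le measurable_const hmU)
  have hμM_ne_top : μ M ≠ ⊤ := measure_ne_top _ _
  have hμM_ne : μ M ≠ 0 := by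
    intro h
    rw [hp₀, h] at hppos
    simp at hppos
  have hμM_eq : μ M = ENNReal.ofReal p₀ := by
    rw [hp₀, ENNReal.ofReal_toReal hμM_ne_top]
  -- the set B
  set A : Set Ω := {ω | y ω ≤ m ∧ m ≤ yU ω} with hA
  set B : Set Ω := A ∩ M with hB
  have hAmeas : MeasurableSet A :=
    (measurableSet_le hmy measurable_const).inter (measurableSet_le measurable_const hmU)
  have hBmeas : MeasurableSet B := hAmeas.inter hMmeas
  have hAdiff : μ (A \ M) = 0 := by
    refine measure_mono_null ?_ (by simpa [ae_iff] using hsel)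
    rintro ω ⟨⟨hym, hmU'⟩, hnM⟩
    simp only [hM, mem_setOf_eq, not_and, not_le] at hnM
    simp only [mem_setOf_eq, not_and, not_le]
    intro hLy
    exfalso
    exact absurd hmU' (not_le.mpr (hnM (le_trans hLy hym)))
  have hμB_eq : μ B = μ A := by
    rw [hB]
    have := measure_inter_add_diff A hMmeas (μ := μ)
    rw [hAdiff, add_zero] at this
    exact this
  have hμA_ge : ENNReal.ofReal αminus ≤ μ A := by
    have hsubset : {ω | y ω ≤ m} ⊆ A ∪ {ω | yU ω < m} := by
      intro ω hω
      by_cases h : m ≤ yU ω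
      · exact Or.inl ⟨hω, h⟩
      · exact Or.inr (not_le.mp h)
    have h1 : (1 : ENNReal) / 2 ≤ μ A + μ {ω | yU ω < m} :=
      le_trans hmed (le_trans (measure_mono hsubset) (measure_union_le _ _))
    have hαeq : αminus = 1 / 2 - pminus := by
      rw [hαm, max_eq_left (by linarith)]
    rw [hαeq, ENNReal.ofReal_sub _ (by rw [hpm]; exact ENNReal.toReal_nonneg)]
    have hofpm : ENNReal.ofReal pminus = μ {ω | yU ω < m} := by
      rw [hpm, ENNReal.ofReal_toReal (measure_ne_top _ _)]
    have hofhalf : ENNReal.ofReal ((1:ℝ) / 2) = (1 : ENNReal) / 2 := by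
      rw [ENNReal.ofReal_div_of_pos (by norm_num)]
      norm_num
    rw [hofpm, hofhalf, tsub_le_iff_right]
    exact h1
  -- conditional measure setup
  set ν := μ[|M] with hν
  have : IsProbabilityMeasure ν := cond_isProbabilityMeasure hμM_ne
  set V : Ω → ℝ := fun ω => yU ω - m with hV
  have hVmeas : Measurable V := hmU.sub measurable_const
  have hνMc : ν Mᶜ = 0 := by
    rw [hν, cond_apply hMmeas, inter_compl_self, measure_empty, mul_zero]
  have hVnn : ∀ᵐ ω ∂ν, 0 ≤ V ω := by
    rw [ae_iff]
    refine measure_mono_null ?_ hνMc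
    intro ω hω
    simp only [mem_setOf_eq, not_le] at hω
    simp only [mem_compl_iff, hM, mem_setOf_eq, not_and, not_le]
    intro _
    simp only [hV] at hω
    linarith
  have hVint : Integrable V ν := by
    rw [hν, ProbabilityTheory.cond]
    exact ((hiU.sub (integrable_const m)).restrict).smul_measure
      (ENNReal.inv_ne_top.mpr hμM_ne)
  have hνB : ENNReal.ofReal c ≤ ν B := by
    rw [hν, cond_apply hMmeas, hc, ENNReal.ofReal_div_of_pos hppos, ← hμM_eq]
    have hMB : M ∩ B = B := by rw [hB]; rw [inter_comm A M, ← inter_assoc, inter_self]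
    rw [hMB, ENNReal.div_eq_inv_mul]
    refine mul_le_mul_right ?_ _
    rw [hμB_eq]
    exact hμA_ge
  have hc1 : c ≤ 1 := by
    have hμBM : μ B ≤ μ M := by rw [hB]; exact measure_mono inter_subset_right
    have : ENNReal.ofReal αminus ≤ μ M := le_trans (hμB_eq ▸ hμA_ge) hμBM
    rw [hμM_eq] at this
    have hαp : αminus ≤ p₀ := by
      have := (ENNReal.ofReal_le_ofReal_iff hp₀0).mp this
      exact this
    rw [hc]
    exact div_le_one_of_le₀ hαp hp₀0
  have hVB : ∀ ω ∈ B, 0 ≤ V ω := by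
    rintro ω ⟨⟨_, hmu⟩, _⟩
    simp only [hV]; linarith
  -- apply the key lemma
  have hkey : ∫ u in (0:ℝ)..c, Q u ≤ ∫ ω in B, V ω ∂ν :=
    hl_bound ν V hVmeas hVnn Q (fun u => hQ u) c hcpos hc1 B hBmeas hVB hνB hVint
  -- translate ∫_B V dν to ∫_B V dμ
  have hBsubM : B ⊆ M := inter_subset_right
  have hsetν : p₀ * ∫ ω in B, V ω ∂ν = ∫ ω in B, V ω ∂μ := by
    have h1 : ∫ ω in B, V ω ∂ν = ((μ M)⁻¹).toReal * ∫ ω in B, V ω ∂μ := by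
      rw [hν, ProbabilityTheory.cond, Measure.restrict_smul,
        Measure.restrict_restrict hBmeas, inter_eq_self_of_subset_left hBsubM,
        integral_smul_measure, smul_eq_mul]
    rw [h1, ENNReal.toReal_inv, ← hp₀, ← mul_assoc, mul_inv_cancel₀ (ne_of_gt hppos), one_mul]
  have h3 : ∫ ω in B, V ω ∂μ ≤ ∫ ω in B, (yU ω - y ω) ∂μ := by
    refine setIntegral_mono_on ((hiU.sub (integrable_const m)).integrableOn)
      ((hiU.sub hiy).integrableOn) hBmeas ?_
    rintro ω ⟨⟨hym, _⟩, _⟩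
    simp only [hV]
    linarith
  have h4 : ∫ ω in B, (yU ω - y ω) ∂μ ≤ ∫ ω, (yU ω - y ω) ∂μ := by
    refine setIntegral_le_integral (hiU.sub hiy) ?_
    filter_upwards [hsel] with ω hω
    simp only [Pi.zero_apply]
    linarith [hω.2]
  have h5 : ∫ ω, (yU ω - y ω) ∂μ = (∫ ω, yU ω ∂μ) - ∫ ω, y ω ∂μ := integral_sub hiU hiy
  have hfinal : p₀ * ∫ u in (0:ℝ)..c, Q u ≤ (∫ ω, yU ω ∂μ) - ∫ ω, y ω ∂μ := by
    calc p₀ * ∫ u in (0:ℝ)..c, Q u ≤ p₀ * ∫ ω in B, V ω ∂ν :=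
          mul_le_mul_of_nonneg_left hkey hp₀0
      _ = ∫ ω in B, V ω ∂μ := hsetν
      _ ≤ ∫ ω in B, (yU ω - y ω) ∂μ := h3
      _ ≤ ∫ ω, (yU ω - y ω) ∂μ := h4
      _ = (∫ ω, yU ω ∂μ) - ∫ ω, y ω ∂μ := h5
  linarith
end

section
/- Median-restricted mean lower bound: With Y = [y_L, y_U], m ∈ ℝ, M = {y_L ≤ m ≤ y_U}, p₀ = P(M), p₊ = P(y_L > m) ≤ 1/2, α₊ = (1/2 − p₊)₊, every selection y of Y with P(y ≥ m) ≥ 1/2 satisfies E[y] ≥ E[y_L] + p₀ ∫₀^{α₊/p₀} F^{-1}_{L_m|M}(u) du, where L_m = m − y_L conditional on M. -/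
open MeasureTheory Set ProbabilityTheory
open scoped ENNReal

/-- Median-restricted mean lower bound: any selection y of [y_L,y_U] with
P(y ≥ m) ≥ 1/2 satisfies
E[y] ≥ E[y_L] + p₀ ∫₀^{α₊/p₀} F^{-1}_{L_m|M}(u) du. -/
theorem stmt_12
    {Ω : Type*} [MeasurableSpace Ω] (μ : Measure Ω) [IsProbabilityMeasure μ]
    (yL yU : Ω → ℝ) (hmL : Measurable yL) (hmU : Measurable yU)
    (hiL : Integrable yL μ) (hiU : Integrable yU μ)
    (hle : ∀ᵐ ω ∂μ, yL ω ≤ yU ω)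
    (m : ℝ)
    (M : Set Ω) (hM : M = {ω | yL ω ≤ m ∧ m ≤ yU ω})
    (p₀ pplus αplus : ℝ)
    (hp₀ : p₀ = (μ M).toReal)
    (hpp : pplus = (μ {ω | m < yL ω}).toReal)
    (hpple : pplus ≤ 1 / 2)
    (hαp : αplus = max (1 / 2 - pplus) 0)
    (Q : ℝ → ℝ)
    (hQ : ∀ u : ℝ, Q u = sInf {t : ℝ | ENNReal.ofReal u ≤ μ[|M] {ω | m - yL ω ≤ t}})
    (y : Ω → ℝ) (hmy : Measurable y)
    (hsel : ∀ᵐ ω ∂μ, yL ω ≤ y ω ∧ y ω ≤ yU ω)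
    (hmed : (1 : ENNReal) / 2 ≤ μ {ω | m ≤ y ω}) :
    (∫ ω, yL ω ∂μ) + p₀ * (∫ u in (0 : ℝ)..(αplus / p₀), Q u) ≤ ∫ ω, y ω ∂μ := by
  -- Setup
  have hMmeas : MeasurableSet M := by
    rw [hM]
    exact (measurableSet_le hmL measurable_const).inter
      (measurableSet_le measurable_const hmU)
  set L : Ω → ℝ := fun ω => m - yL ω with hLdef
  have hLmeas : Measurable L := measurable_const.sub hmL
  have hLint : Integrable L μ := (integrable_const m).sub hiL
  set A : Set Ω := M ∩ {ω | m ≤ y ω} with hAdef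
  have hAmeas : MeasurableSet A :=
    hMmeas.inter (measurableSet_le measurable_const hmy)
  have hAM : A ⊆ M := inter_subset_left
  have hLnnM : ∀ ω ∈ M, 0 ≤ L ω := by
    intro ω hω
    rw [hM] at hω
    simp only [hLdef]
    linarith [hω.1]
  -- y is integrable
  have hyint : Integrable y μ := by
    refine Integrable.mono' (hiL.abs.add hiU.abs) hmy.aestronglyMeasurable ?_
    filter_upwards [hsel] with ω hω
    rw [Real.norm_eq_abs, abs_le]
    simp only [Pi.add_apply]
    constructor
    · linarith [neg_abs_le (yL ω), abs_nonneg (yU ω), hω.1]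
    · linarith [le_abs_self (yU ω), abs_nonneg (yL ω), hω.2]
  have hsubint : Integrable (fun ω => y ω - yL ω) μ := hyint.sub hiL
  have hsubnn : 0 ≤ᵐ[μ] fun ω => y ω - yL ω := by
    filter_upwards [hsel] with ω hω; simp [sub_nonneg, hω.1]
  -- main reduction
  have key : p₀ * (∫ u in (0 : ℝ)..(αplus / p₀), Q u) ≤ ∫ ω, (y ω - yL ω) ∂μ := by
    set β := αplus / p₀ with hβdef
    have hp₀nn : 0 ≤ p₀ := hp₀ ▸ ENNReal.toReal_nonneg
    have hαnn : 0 ≤ αplus := hαp ▸ le_max_right _ _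
    have hβnn : 0 ≤ β := div_nonneg hαnn hp₀nn
    -- Step A : ∫_A L dμ ≤ ∫ (y - yL) dμ
    have stepA : ∫ ω in A, L ω ∂μ ≤ ∫ ω, (y ω - yL ω) ∂μ := by
      have h1 : ∫ ω in A, L ω ∂μ ≤ ∫ ω in A, (y ω - yL ω) ∂μ := by
        refine setIntegral_mono_on hLint.integrableOn hsubint.integrableOn hAmeas ?_
        intro ω hω
        have : m ≤ y ω := hω.2
        simp only [hLdef]
        linarith
      have h2 : ∫ ω in A, (y ω - yL ω) ∂μ ≤ ∫ ω, (y ω - yL ω) ∂μ :=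
        setIntegral_le_integral hsubint hsubnn
      linarith
    have hintnn : 0 ≤ ∫ ω, (y ω - yL ω) ∂μ := integral_nonneg_of_ae hsubnn
    by_cases hp0 : p₀ = 0
    · rw [hp0, zero_mul]; exact hintnn
    have hp0pos : 0 < p₀ := lt_of_le_of_ne hp₀nn (Ne.symm hp0)
    by_cases hQint : IntervalIntegrable Q volume 0 β
    swap
    · rw [intervalIntegral.integral_undef hQint, mul_zero]; exact hintnn
    have hμM0 : μ M ≠ 0 := by
      intro h; apply hp0; rw [hp₀, h]; simp
    have hμMtop : μ M ≠ ⊤ := measure_ne_top μ M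
    set ν := μ[|M] with hν
    have hνprob : IsProbabilityMeasure ν := cond_isProbabilityMeasure hμM0
    -- measure bound : αplus ≤ (μ A).toReal
    have hAbound : αplus ≤ (μ A).toReal := by
      have hsub2 : μ {ω | m ≤ y ω} ≤ μ (A ∪ {ω | m < yL ω}) := by
        apply measure_mono_ae
        filter_upwards [hsel] with ω hω hmem
        by_cases hc : m < yL ω
        · exact Or.inr hc
        · exact Or.inl ⟨hM ▸ ⟨le_of_not_gt hc, le_trans hmem hω.2⟩, hmem⟩
      have h3 : (1 : ℝ≥0∞) / 2 ≤ μ A + μ {ω | m < yL ω} :=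
        le_trans hmed (hsub2.trans (measure_union_le _ _))
      have h4 : (1 : ℝ) / 2 ≤ (μ A).toReal + pplus := by
        rw [hpp, ← ENNReal.toReal_add (measure_ne_top μ A) (measure_ne_top μ _)]
        calc (1 : ℝ) / 2 = ((1 : ℝ≥0∞) / 2).toReal := by norm_num
          _ ≤ _ := ENNReal.toReal_mono
              (ENNReal.add_ne_top.2 ⟨measure_ne_top μ A, measure_ne_top μ _⟩) h3
      rw [hαp]
      exact max_le (by linarith) ENNReal.toReal_nonneg
    -- β bound in the conditional measure
    have ofβ : ENNReal.ofReal β ≤ ν A := by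
      have hA' : ν A = μ A / μ M := by
        rw [hν, cond_apply hMmeas, inter_eq_self_of_subset_right hAM,
          ENNReal.div_eq_inv_mul]
      rw [hA', hβdef, ENNReal.ofReal_div_of_pos hp0pos]
      have hmm : ENNReal.ofReal p₀ = μ M := by
        rw [hp₀, ENNReal.ofReal_toReal hμMtop]
      rw [hmm]
      refine ENNReal.div_le_div_right ?_ _
      calc ENNReal.ofReal αplus ≤ ENNReal.ofReal (μ A).toReal :=
            ENNReal.ofReal_le_ofReal hAbound
        _ = μ A := ENNReal.ofReal_toReal (measure_ne_top μ A)
    -- quantile facts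
    have hνneg : ∀ s : ℝ, s < 0 → ν {ω | m - yL ω ≤ s} = 0 := by
      intro s hs
      have hempty : M ∩ {ω | m - yL ω ≤ s} = ∅ := by
        ext ω
        simp only [mem_inter_iff, mem_empty_iff_false, iff_false, not_and, mem_setOf_eq]
        intro h1
        have := hLnnM ω h1
        simp only [hLdef] at this
        linarith
      rw [hν, cond_apply hMmeas, hempty, measure_empty, mul_zero]
    have hQnn : ∀ u : ℝ, 0 < u → 0 ≤ Q u := by
      intro u hu
      rw [hQ]
      apply Real.sInf_nonneg
      intro s hs
      by_contra hneg
      push_neg at hneg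
      rw [mem_setOf_eq, hνneg s hneg, nonpos_iff_eq_zero,
        ENNReal.ofReal_eq_zero] at hs
      linarith
    have hbdd0 : ∀ u : ℝ, 0 < u →
        ∀ s ∈ {t : ℝ | ENNReal.ofReal u ≤ ν {ω | m - yL ω ≤ t}}, (0 : ℝ) ≤ s := by
      intro u hu s hs
      by_contra h
      push_neg at h
      rw [mem_setOf_eq, hνneg s h, nonpos_iff_eq_zero,
        ENNReal.ofReal_eq_zero] at hs
      linarith
    have hFlt : ∀ t u : ℝ, 0 < t → 0 < u → t < Q u →
        (ν {ω | m - yL ω ≤ t}).toReal < u := by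
      intro t u ht hu hlt
      by_contra hc
      push_neg at hc
      have hmem : t ∈ {s : ℝ | ENNReal.ofReal u ≤ ν {ω | m - yL ω ≤ s}} := by
        rw [mem_setOf_eq]
        calc ENNReal.ofReal u ≤ ENNReal.ofReal ((ν {ω | m - yL ω ≤ t}).toReal) :=
              ENNReal.ofReal_le_ofReal hc
          _ = ν {ω | m - yL ω ≤ t} := ENNReal.ofReal_toReal (measure_ne_top ν _)
      have : Q u ≤ t := by
        rw [hQ]
        exact csInf_le ⟨0, fun s hs => hbdd0 u hu s hs⟩ hmem
      linarith
    -- conditional integral of g = A.indicator L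
    have hgnn : ∀ ω, 0 ≤ A.indicator L ω :=
      indicator_nonneg fun ω hω => hLnnM ω (hAM hω)
    have hgmeas : Measurable (A.indicator L) := hLmeas.indicator hAmeas
    have hgintν : Integrable (A.indicator L) ν := by
      have h1 : Integrable (A.indicator L) μ := hLint.indicator hAmeas
      have h2 : Integrable (A.indicator L) (μ.restrict M) := h1.restrict
      have h3 := h2.smul_measure (c := (μ M)⁻¹) (by simp [hμM0])
      exact h3
    -- layer cake on both sides
    have hQIntOn : IntegrableOn Q (Ioc 0 β) volume := by
      rw [intervalIntegrable_iff, uIoc_of_le hβnn] at hQint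
      exact hQint
    have hQnnae : 0 ≤ᵐ[volume.restrict (Ioc (0 : ℝ) β)] Q :=
      (ae_restrict_iff' measurableSet_Ioc).2 (ae_of_all _ fun u hu => hQnn u hu.1)
    have hQreal : ∫ u in Ioc (0 : ℝ) β, Q u
        = (∫⁻ u in Ioc (0 : ℝ) β, ENNReal.ofReal (Q u)).toReal :=
      integral_eq_lintegral_of_nonneg_ae hQnnae hQIntOn.aestronglyMeasurable
    have hQlayer : ∫⁻ u in Ioc (0 : ℝ) β, ENNReal.ofReal (Q u)
        = ∫⁻ t in Ioi (0 : ℝ), (volume.restrict (Ioc (0 : ℝ) β)) {u | t < Q u} :=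
      lintegral_eq_lintegral_meas_lt _ hQnnae hQIntOn.aemeasurable
    have hgnnae : 0 ≤ᵐ[ν] A.indicator L := ae_of_all _ hgnn
    have hgreal : ∫ ω, A.indicator L ω ∂ν
        = (∫⁻ ω, ENNReal.ofReal (A.indicator L ω) ∂ν).toReal :=
      integral_eq_lintegral_of_nonneg_ae hgnnae hgmeas.aestronglyMeasurable
    have hglayer : ∫⁻ ω, ENNReal.ofReal (A.indicator L ω) ∂ν
        = ∫⁻ t in Ioi (0 : ℝ), ν {a | t < A.indicator L a} :=
      lintegral_eq_lintegral_meas_lt _ hgnnae hgmeas.aemeasurable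
    have hgfin : ∫⁻ ω, ENNReal.ofReal (A.indicator L ω) ∂ν < ⊤ :=
      hgintν.lintegral_lt_top
    -- pointwise comparison of the layer measures
    have hptwise : ∀ t : ℝ, t ∈ Ioi (0 : ℝ) →
        (volume.restrict (Ioc (0 : ℝ) β)) {u | t < Q u} ≤ ν {a | t < A.indicator L a} := by
      intro t ht
      rw [mem_Ioi] at ht
      rw [Measure.restrict_apply' measurableSet_Ioc]
      have hsub : {u | t < Q u} ∩ Ioc 0 β ⊆ Ioc ((ν {ω | m - yL ω ≤ t}).toReal) β := by
        rintro u ⟨h1, h2⟩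
        exact ⟨hFlt t u ht h2.1 h1, h2.2⟩
      calc volume ({u | t < Q u} ∩ Ioc 0 β)
          ≤ volume (Ioc ((ν {ω | m - yL ω ≤ t}).toReal) β) := measure_mono hsub
        _ = ENNReal.ofReal (β - (ν {ω | m - yL ω ≤ t}).toReal) := Real.volume_Ioc
        _ = ENNReal.ofReal β - ENNReal.ofReal ((ν {ω | m - yL ω ≤ t}).toReal) :=
            ENNReal.ofReal_sub _ ENNReal.toReal_nonneg
        _ = ENNReal.ofReal β - ν {ω | m - yL ω ≤ t} := by
            rw [ENNReal.ofReal_toReal (measure_ne_top ν _)]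
        _ ≤ ν A - ν {ω | m - yL ω ≤ t} := tsub_le_tsub_right ofβ _
        _ ≤ ν {a | t < A.indicator L a} := by
            rw [tsub_le_iff_right]
            refine le_trans (measure_mono ?_) (measure_union_le _ _)
            intro a ha
            by_cases hc : m - yL a ≤ t
            · exact Or.inr hc
            · push_neg at hc
              left
              show t < A.indicator L a
              rw [indicator_of_mem ha]
              exact hc
    have hlint_le : ∫⁻ u in Ioc (0 : ℝ) β, ENNReal.ofReal (Q u)
        ≤ ∫⁻ ω, ENNReal.ofReal (A.indicator L ω) ∂ν := by
      rw [hQlayer, hglayer]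
      exact lintegral_mono_ae
        ((ae_restrict_iff' measurableSet_Ioi).2 (ae_of_all _ hptwise))
    have hint_le : ∫ u in Ioc (0 : ℝ) β, Q u ≤ ∫ ω, A.indicator L ω ∂ν := by
      rw [hQreal, hgreal]
      exact ENNReal.toReal_mono hgfin.ne hlint_le
    -- identify the conditional integral
    have hgν_eq : ∫ ω, A.indicator L ω ∂ν = p₀⁻¹ * ∫ ω in A, L ω ∂μ := by
      have : ν = (μ M)⁻¹ • μ.restrict M := rfl
      rw [this, integral_smul_measure, integral_indicator hAmeas,
        Measure.restrict_restrict hAmeas, inter_eq_self_of_subset_left hAM,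
        ENNReal.toReal_inv, hp₀, smul_eq_mul]
    -- conclude
    have hIoc : ∫ u in (0 : ℝ)..β, Q u = ∫ u in Ioc (0 : ℝ) β, Q u :=
      intervalIntegral.integral_of_le hβnn
    calc p₀ * ∫ u in (0 : ℝ)..β, Q u = p₀ * ∫ u in Ioc (0 : ℝ) β, Q u := by rw [hIoc]
      _ ≤ p₀ * (p₀⁻¹ * ∫ ω in A, L ω ∂μ) :=
          mul_le_mul_of_nonneg_left (hint_le.trans_eq hgν_eq) hp₀nn
      _ = ∫ ω in A, L ω ∂μ := by field_simp
      _ ≤ ∫ ω, (y ω - yL ω) ∂μ := stepA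
  have hsplit : ∫ ω, (y ω - yL ω) ∂μ = (∫ ω, y ω ∂μ) - ∫ ω, yL ω ∂μ :=
    integral_sub hyint hiL
  linarith
end

section
/- Sharpness of random-set bounds: For a random interval Y = [y_L, y_U] and closed A ⊆ ℝ, there exist measurable selections y⁺ and y⁻ of Y with P(y⁺ ∈ A) = P(Y ∩ A ≠ ∅) and P(y⁻ ∈ A) = P(Y ⊆ A). -/
open MeasureTheory Set

/-- Sharpness of the random-set probability bounds for random intervals:
there exist measurable selections attaining the capacity and containment
probabilities of a closed target set A. -/
theorem stmt_16
    {Ω : Type*} [MeasurableSpace Ω] (μ : Measure Ω) [IsProbabilityMeasure μ]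
    (yL yU : Ω → ℝ) (hmL : Measurable yL) (hmU : Measurable yU)
    (hle : ∀ ω, yL ω ≤ yU ω)
    (A : Set ℝ) (hA : IsClosed A) :
    (∃ yp : Ω → ℝ, Measurable yp ∧
      (∀ ω, yp ω ∈ Set.Icc (yL ω) (yU ω)) ∧
      μ {ω | yp ω ∈ A} = μ {ω | (Set.Icc (yL ω) (yU ω) ∩ A).Nonempty}) ∧
    (∃ ym : Ω → ℝ, Measurable ym ∧
      (∀ ω, ym ω ∈ Set.Icc (yL ω) (yU ω)) ∧
      μ {ω | ym ω ∈ A} = μ {ω | Set.Icc (yL ω) (yU ω) ⊆ A}) := by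
  classical
  constructor
  · -- capacity part
    set W : ℝ → ℝ := fun a => if (A ∩ Ici a).Nonempty then sInf (A ∩ Ici a) else a with hWdef
    have hWmem : ∀ a, (A ∩ Ici a).Nonempty → W a ∈ A ∩ Ici a := by
      intro a h
      have hW : W a = sInf (A ∩ Ici a) := if_pos h
      rw [hW]
      exact (hA.inter isClosed_Ici).csInf_mem h ⟨a, fun x hx => hx.2⟩
    have hWmono : Monotone W := by
      intro a b hab
      by_cases hb : (A ∩ Ici b).Nonempty
      · have hsub : A ∩ Ici b ⊆ A ∩ Ici a :=
          inter_subset_inter_right _ (Ici_subset_Ici.mpr hab)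
        have ha : (A ∩ Ici a).Nonempty := hb.mono hsub
        simp only [hWdef, if_pos ha, if_pos hb]
        exact csInf_le_csInf ⟨a, fun x hx => hx.2⟩ hb hsub
      · by_cases ha : (A ∩ Ici a).Nonempty
        · simp only [hWdef, if_pos ha, if_neg hb]
          obtain ⟨x, hxA, hxa⟩ := ha
          have hxb : x ≤ b := by
            by_contra h
            exact hb ⟨x, hxA, le_of_lt (lt_of_not_ge h)⟩
          exact le_trans (csInf_le ⟨a, fun y hy => hy.2⟩ ⟨hxA, hxa⟩) hxb
        · simp only [hWdef, if_neg ha, if_neg hb]; exact hab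
    set E : Set ℝ := {a | (A ∩ Ici a).Nonempty} with hEdef
    have hEdown : ∀ a b, a ≤ b → b ∈ E → a ∈ E := by
      rintro a b hab ⟨x, hxA, hxb⟩
      exact ⟨x, hxA, le_trans hab hxb⟩
    have hEmeas : MeasurableSet E := by
      have : E.OrdConnected := ⟨fun x hx y hy z hz => hEdown z y hz.2 hy⟩
      exact this.measurableSet
    set N : Set Ω := {ω | (Set.Icc (yL ω) (yU ω) ∩ A).Nonempty} with hNdef
    have hNeq : N = (yL ⁻¹' E) ∩ {ω | W (yL ω) ≤ yU ω} := by
      ext ω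
      constructor
      · rintro ⟨x, hxI, hxA⟩
        have hE : yL ω ∈ E := ⟨x, hxA, hxI.1⟩
        refine ⟨hE, ?_⟩
        simp only [mem_setOf_eq]
        have hW : W (yL ω) = sInf (A ∩ Ici (yL ω)) := if_pos hE
        rw [hW]
        exact le_trans (csInf_le ⟨yL ω, fun y hy => hy.2⟩ ⟨hxA, hxI.1⟩) hxI.2
      · rintro ⟨hE, hWle⟩
        obtain ⟨hWA, hWge⟩ := hWmem (yL ω) hE
        exact ⟨W (yL ω), ⟨hWge, hWle⟩, hWA⟩
    have hNmeas : MeasurableSet N := by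
      rw [hNeq]
      exact (hmL hEmeas).inter (measurableSet_le (hWmono.measurable.comp hmL) hmU)
    refine ⟨fun ω => if ω ∈ N then W (yL ω) else yL ω,
      Measurable.ite hNmeas (hWmono.measurable.comp hmL) hmL, ?_, ?_⟩
    · intro ω
      by_cases hω : ω ∈ N
      · simp only [if_pos hω]
        rw [hNeq] at hω
        obtain ⟨hE, hWle⟩ := hω
        exact ⟨(hWmem (yL ω) hE).2, hWle⟩
      · simp only [if_neg hω]
        exact ⟨le_refl _, hle ω⟩
    · congr 1
      ext ω
      simp only [mem_setOf_eq]
      constructor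
      · intro h
        by_cases hω : ω ∈ N
        · exact hω
        · simp only [if_neg hω] at h
          exact absurd (⟨yL ω, ⟨le_refl _, hle ω⟩, h⟩ : (Set.Icc (yL ω) (yU ω) ∩ A).Nonempty) hω
      · intro hω
        simp only [if_pos (hω : ω ∈ N)]
        rw [hNeq] at hω
        exact (hWmem (yL ω) hω.1).1
  · -- containment part
    set r : ℕ → ℝ := fun n => ((Denumerable.ofNat ℚ n : ℚ) : ℝ) with hrdef
    set p : ℕ → Ω → Prop := fun n ω => r n ∉ A ∧ yL ω ≤ r n ∧ r n ≤ yU ω with hpdef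
    have hp : ∀ n, MeasurableSet {ω | p n ω} := by
      intro n
      have : {ω | p n ω} = {ω | r n ∉ A} ∩ ({ω | yL ω ≤ r n} ∩ {ω | r n ≤ yU ω}) := rfl
      rw [this]
      exact (MeasurableSet.const _).inter
        ((measurableSet_le hmL measurable_const).inter (measurableSet_le measurable_const hmU))
    have htot : ∀ ω, ∃ n, p n ω ∨ ∀ m, ¬ p m ω := by
      intro ω
      by_cases h : ∃ n, p n ω
      · exact h.imp fun n hn => Or.inl hn
      · exact ⟨0, Or.inr (not_exists.mp h)⟩
    have hp' : ∀ n, MeasurableSet {ω | p n ω ∨ ∀ m, ¬ p m ω} := by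
      intro n
      have : {ω | p n ω ∨ ∀ m, ¬ p m ω} = {ω | p n ω} ∪ ⋂ m, {ω | p m ω}ᶜ := by
        ext ω; simp [mem_iInter]
      rw [this]
      exact (hp n).union (MeasurableSet.iInter fun m => (hp m).compl)
    set g : Ω → ℝ := fun ω => r (Nat.find (htot ω)) with hgdef
    have hg : Measurable g :=
      Measurable.find (f := fun n (_ : Ω) => r n) (fun n => measurable_const) hp' htot
    set c : Ω → Prop := fun ω => ∃ n, p n ω with hcdef
    have hfind : ∀ ω, c ω → p (Nat.find (htot ω)) ω := by
      rintro ω ⟨n, hn⟩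
      rcases Nat.find_spec (htot ω) with h | h
      · exact h
      · exact absurd hn (h n)
    have hc : MeasurableSet {ω | c ω} := by
      have : {ω | c ω} = ⋃ n, {ω | p n ω} := by ext ω; simp [hcdef]
      rw [this]
      exact MeasurableSet.iUnion hp
    refine ⟨fun ω => if yL ω ∈ A then (if yU ω ∈ A then (if c ω then g ω else yL ω)
        else yU ω) else yL ω,
      Measurable.ite (hmL hA.measurableSet)
        (Measurable.ite (hmU hA.measurableSet) (Measurable.ite hc hg hmL) hmU) hmL, ?_, ?_⟩
    · intro ω
      by_cases h1 : yL ω ∈ A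
      · by_cases h2 : yU ω ∈ A
        · by_cases h3 : c ω
          · simp only [if_pos h1, if_pos h2, if_pos h3]
            obtain ⟨-, hge, hle'⟩ := hfind ω h3
            exact ⟨hge, hle'⟩
          · simp only [if_pos h1, if_pos h2, if_neg h3]
            exact ⟨le_refl _, hle ω⟩
        · simp only [if_pos h1, if_neg h2]
          exact ⟨hle ω, le_refl _⟩
      · simp only [if_neg h1]
        exact ⟨le_refl _, hle ω⟩
    · congr 1
      ext ω
      simp only [mem_setOf_eq]
      constructor
      · intro h
        by_contra hsub
        obtain ⟨x, hxI, hxA⟩ := not_subset.mp hsub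
        by_cases h1 : yL ω ∈ A
        · by_cases h2 : yU ω ∈ A
          · -- x is strictly inside, find a rational nearby not in A
            have hx1 : yL ω < x := lt_of_le_of_ne hxI.1 (by rintro rfl; exact hxA h1)
            have hx2 : x < yU ω := lt_of_le_of_ne hxI.2 (fun he => hxA (he ▸ h2))
            have hxo : x ∈ Aᶜ := hxA
            obtain ⟨ε, hε, hball⟩ := Metric.isOpen_iff.mp hA.isOpen_compl x hxo
            obtain ⟨q, hq1, hq2⟩ := exists_rat_btwn (show max (yL ω) (x - ε) < x from
              max_lt hx1 (by linarith))
            have hq3 : x - ε < (q : ℝ) := lt_of_le_of_lt (le_max_right _ _) hq1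
            have hq4 : yL ω < (q : ℝ) := lt_of_le_of_lt (le_max_left _ _) hq1
            have hqA : (q : ℝ) ∉ A := by
              intro hqA
              have hmem : (q : ℝ) ∈ Aᶜ := hball (by
                rw [Metric.mem_ball, Real.dist_eq, abs_lt]
                constructor <;> linarith)
              exact hmem hqA
            have hcω : c ω := by
              obtain ⟨n, hn⟩ := (Denumerable.eqv ℚ).symm.surjective q
              have hrq : r n = (q : ℝ) := by
                simp only [hrdef]; exact_mod_cast congrArg (fun z : ℚ => (z : ℝ)) hn
              refine ⟨n, ?_⟩
              show r n ∉ A ∧ yL ω ≤ r n ∧ r n ≤ yU ω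
              rw [hrq]
              exact ⟨hqA, le_of_lt hq4, by linarith⟩
            simp only [if_pos h1, if_pos h2, if_pos hcω] at h
            exact (hfind ω hcω).1 h
          · simp only [if_pos h1, if_neg h2] at h
            exact h2 h
        · simp only [if_neg h1] at h
          exact h1 h
      · intro hsub
        have h1 : yL ω ∈ A := hsub ⟨le_refl _, hle ω⟩
        have h2 : yU ω ∈ A := hsub ⟨hle ω, le_refl _⟩
        have h3 : ¬ c ω := by
          rintro ⟨n, hn1, hn2, hn3⟩
          exact hn1 (hsub ⟨hn2, hn3⟩)
        simp only [if_pos h1, if_pos h2, if_neg h3]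
        exact h1
end
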